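/- arXiv:2511.10223 — 2 statements merged into one kernel-verified Lean document; each statement's English description precedes it below -/
import Mathlib

section
/- For all real numbers e ≥ 0 and s ≥ 0, e + e·s·log(1 + 1/(s+1)) ≤ 2·(e + log(s+1)). -/
theorem stmt_1 (e s : ℝ) (he : 0 ≤ e) (hs : 0 ≤ s) :
    e + e * s * Real.log (1 + 1 / (s + 1)) ≤ 2 * (e + Real.log (s + 1)) := by
  have hs1 : (0:ℝ) < s + 1 := by linarith
  have hlog : Real.log (1 + 1 / (s + 1)) ≤ 1 / (s + 1) := by
    have := Real.log_le_sub_one_of_pos (x := 1 + 1 / (s + 1)) (by positivity)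
    linarith
  have hkey : s * Real.log (1 + 1 / (s + 1)) ≤ 1 := by
    have h1 : s * Real.log (1 + 1 / (s + 1)) ≤ s * (1 / (s + 1)) :=
      mul_le_mul_of_nonneg_left hlog hs
    have h2 : s * (1 / (s + 1)) ≤ 1 := by
      rw [mul_one_div, div_le_one hs1]; linarith
    linarith
  have h3 : e * (s * Real.log (1 + 1 / (s + 1))) ≤ e * 1 :=
    mul_le_mul_of_nonneg_left hkey he
  have h4 : 0 ≤ Real.log (s + 1) := Real.log_nonneg (by linarith)
  nlinarith [h3]
end

section
/- Let α > 0, 0 < p < 1, and λ ∈ (0,1). For every integer x ≥ 1, (α·x·(x−1)+1)·((x+1)^λ − x^λ) + x·(x·p)^λ − x^(1+λ) ≤ x^(1+λ)·(α·λ + p^λ − 1) + λ·x^(λ−1). -/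
theorem stmt_7 (α p l : ℝ) (hα : 0 < α) (hp0 : 0 < p) (hp1 : p < 1)
    (hl0 : 0 < l) (hl1 : l < 1) (x : ℕ) (hx : 1 ≤ x) :
    (α * x * (x - 1) + 1) * (((x : ℝ) + 1) ^ l - (x : ℝ) ^ l)
      + x * ((x : ℝ) * p) ^ l - (x : ℝ) ^ (1 + l)
      ≤ (x : ℝ) ^ (1 + l) * (α * l + p ^ l - 1) + l * (x : ℝ) ^ (l - 1) := by
  set X : ℝ := (x : ℝ) with hXdef
  have hX : (1 : ℝ) ≤ X := by rw [hXdef]; exact_mod_cast hx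
  have hX0 : (0 : ℝ) < X := lt_of_lt_of_le one_pos hX
  -- key: (X+1)^l - X^l ≤ l * X^(l-1)
  have hfac : X + 1 = X * (1 + 1 / X) := by field_simp
  have hs : (-1 : ℝ) ≤ 1 / X := by
    have h0 : (0:ℝ) ≤ 1 / X := by positivity
    linarith
  have hbern : (1 + 1 / X) ^ l ≤ 1 + l * (1 / X) := by
    have := rpow_one_add_le_one_add_mul_self hs hl0.le hl1.le
    linarith [this]
  have hmul : (X + 1) ^ l = X ^ l * (1 + 1 / X) ^ l := by
    rw [hfac, Real.mul_rpow hX0.le (by positivity)]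
  have hXl1 : X ^ l / X = X ^ (l - 1) := by
    rw [Real.rpow_sub hX0, Real.rpow_one]
  have hkey : (X + 1) ^ l - X ^ l ≤ l * X ^ (l - 1) := by
    have h1 : (X + 1) ^ l ≤ X ^ l * (1 + l * (1 / X)) := by
      rw [hmul]
      exact mul_le_mul_of_nonneg_left hbern (Real.rpow_nonneg hX0.le l)
    have h2 : X ^ l * (1 + l * (1 / X)) = X ^ l + l * (X ^ l / X) := by ring
    rw [h2, hXl1] at h1
    linarith
  have hkey0 : 0 ≤ (X + 1) ^ l - X ^ l := by
    have := Real.rpow_le_rpow hX0.le (by linarith : X ≤ X + 1) hl0.le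
    linarith
  have hX1l : X ^ (1 + l) = X * X ^ l := by
    rw [Real.rpow_add hX0, Real.rpow_one]
  have hXp : X * (X * p) ^ l = X ^ (1 + l) * p ^ l := by
    rw [Real.mul_rpow hX0.le hp0.le, hX1l]; ring
  have hX2 : X * X * X ^ (l - 1) = X ^ (1 + l) := by
    rw [hX1l, ← hXl1]; field_simp
  -- coefficient bound
  have hcoef : α * X * (X - 1) + 1 ≤ α * X * X + 1 := by nlinarith
  have hcoef0 : 0 ≤ α * X * (X - 1) + 1 := by nlinarith
  have hmain : (α * X * (X - 1) + 1) * ((X + 1) ^ l - X ^ l)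
      ≤ (α * X * X + 1) * (l * X ^ (l - 1)) := by
    calc (α * X * (X - 1) + 1) * ((X + 1) ^ l - X ^ l)
        ≤ (α * X * X + 1) * ((X + 1) ^ l - X ^ l) :=
          mul_le_mul_of_nonneg_right hcoef hkey0
      _ ≤ (α * X * X + 1) * (l * X ^ (l - 1)) :=
          mul_le_mul_of_nonneg_left hkey (by nlinarith)
  have hexp : (α * X * X + 1) * (l * X ^ (l - 1))
      = α * l * X ^ (1 + l) + l * X ^ (l - 1) := by
    rw [← hX2]; ring
  rw [hexp] at hmain
  rw [hXp]
  nlinarith [hmain]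
end
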